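/- arXiv:2404.04424 — 3 statements merged into one kernel-verified Lean document; each statement's English description precedes it below -/
import Mathlib

section
/- Let u : {0,1} × 𝒴 → ℝ be nontrivial, witnessed by y₀, y₁ ∈ 𝒴 with u(1,y₁) > u(0,y₁) and u(1,y₀) < u(0,y₀). Let φ : ℝ → ℝ be strictly increasing and concave. Then there exists δ̄ < 1 such that for all δ ∈ (δ̄, 1), the function W(q₀,q₁) = (1/2)·φ((1-q₁)δ·u(0,y₁) + q₁(1-δ)·u(1,y₀) + q₁δ·u(1,y₁) + (1-q₁)(1-δ)·u(0,y₀)) + (1/2)·φ((1-q₀)(1-δ)·u(0,y₁) + q₀δ·u(1,y₀) + q₀(1-δ)·u(1,y₁) + (1-q₀)δ·u(0,y₀)) over [0,1]² has unique maximizer (q₀,q₁) = (0,1). -/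
/-!
Write `a = u(1,y₁) - u(0,y₁) > 0` and `b = u(1,y₀) - u(0,y₀) < 0`. The argument of `φ` for
group 1 is affine in `q₁` with slope `δ a + (1 - δ) b`, and that for group 0 is affine in `q₀` with
slope `(1 - δ) a + δ b`. As `δ → 1` these slopes tend to `a > 0` and `b < 0`, so for `δ` close to
`1` the welfare is strictly increasing in `q₁` and strictly decreasing in `q₀`; since `φ` is
strictly increasing, its unique maximum on `[0,1]²` is at `(q₀, q₁) = (0, 1)`.
-/

open Filter Topology

section MonoAnti

variable {α β : Type*} [PartialOrder α] [AddCommMonoid β] [PartialOrder β] [IsOrderedCancelAddMonoid β]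
  {f g : α → β} {lo hi x y : α}

theorem StrictMono.add_strictAnti_le (hf : StrictMono f) (hg : StrictAnti g) (hx : x ≤ hi)
    (hy : lo ≤ y) : f x + g y ≤ f hi + g lo :=
  add_le_add (hf.monotone hx) (hg.antitone hy)

theorem StrictMono.eq_of_add_strictAnti_eq (hf : StrictMono f) (hg : StrictAnti g) (hx : x ≤ hi)
    (hy : lo ≤ y) (h : f x + g y = f hi + g lo) : x = hi ∧ y = lo := by
  obtain ⟨hfx, hgy⟩ := (add_eq_add_iff_eq_and_eq (hf.monotone hx) (hg.antitone hy)).1 h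
  exact ⟨hx.eq_or_lt.resolve_right fun hlt => (hf hlt).ne hfx,
    (hy.eq_or_lt.resolve_right fun hlt => (hg hlt).ne hgy).symm⟩

end MonoAnti

theorem eventually_pos_convex_comb {a : ℝ} (b : ℝ) (ha : 0 < a) :
    ∀ᶠ δ in 𝓝 (1 : ℝ), 0 < δ * a + (1 - δ) * b := by
  have : Tendsto (fun δ : ℝ => δ * a + (1 - δ) * b) (𝓝 1) (𝓝 a) := by
    have hcont : Continuous fun δ : ℝ => δ * a + (1 - δ) * b := by fun_prop
    simpa using hcont.tendsto 1
  exact this.eventually_const_lt ha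

theorem exists_convex_comb_signs_near_one {a b : ℝ} (ha : 0 < a) (hb : b < 0) :
    ∃ δbar < 1, ∀ δ, δbar < δ → δ < 1 → 0 < δ * a + (1 - δ) * b ∧ (1 - δ) * a + δ * b < 0 := by
  have hneg : ∀ᶠ δ in 𝓝 (1 : ℝ), (1 - δ) * a + δ * b < 0 :=
    (eventually_pos_convex_comb (-a) (neg_pos.2 hb)).mono fun δ hδ => by linarith
  obtain ⟨δbar, hδbar, h⟩ := (nhdsLT_basis (1 : ℝ)).eventually_iff.1
    (nhdsWithin_le_nhds ((eventually_pos_convex_comb b ha).and hneg))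
  exact ⟨δbar, hδbar, fun δ h₁ h₂ => h ⟨h₁, h₂⟩⟩

theorem stmt_6_general {𝒴 : Type*} (y₀ y₁ : 𝒴) (u : Fin 2 → 𝒴 → ℝ)
    (hnt1 : u 1 y₁ > u 0 y₁) (hnt0 : u 1 y₀ < u 0 y₀)
    (φ : ℝ → ℝ) (hmono : StrictMono φ) :
    ∃ δbar : ℝ, δbar < 1 ∧ ∀ δ : ℝ, δbar < δ → δ < 1 →
      ∀ q₀ q₁ : ℝ, q₀ ∈ Set.Icc (0:ℝ) 1 → q₁ ∈ Set.Icc (0:ℝ) 1 →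
        (fun p₀ p₁ : ℝ =>
            (1/2) * φ ((1-p₁)*δ*u 0 y₁ + p₁*(1-δ)*u 1 y₀ + p₁*δ*u 1 y₁ + (1-p₁)*(1-δ)*u 0 y₀)
          + (1/2) * φ ((1-p₀)*(1-δ)*u 0 y₁ + p₀*δ*u 1 y₀ + p₀*(1-δ)*u 1 y₁ + (1-p₀)*δ*u 0 y₀))
          q₀ q₁ ≤
        (fun p₀ p₁ : ℝ =>
            (1/2) * φ ((1-p₁)*δ*u 0 y₁ + p₁*(1-δ)*u 1 y₀ + p₁*δ*u 1 y₁ + (1-p₁)*(1-δ)*u 0 y₀)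
          + (1/2) * φ ((1-p₀)*(1-δ)*u 0 y₁ + p₀*δ*u 1 y₀ + p₀*(1-δ)*u 1 y₁ + (1-p₀)*δ*u 0 y₀))
          0 1 ∧
        ((fun p₀ p₁ : ℝ =>
            (1/2) * φ ((1-p₁)*δ*u 0 y₁ + p₁*(1-δ)*u 1 y₀ + p₁*δ*u 1 y₁ + (1-p₁)*(1-δ)*u 0 y₀)
          + (1/2) * φ ((1-p₀)*(1-δ)*u 0 y₁ + p₀*δ*u 1 y₀ + p₀*(1-δ)*u 1 y₁ + (1-p₀)*δ*u 0 y₀))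
          q₀ q₁ =
        (fun p₀ p₁ : ℝ =>
            (1/2) * φ ((1-p₁)*δ*u 0 y₁ + p₁*(1-δ)*u 1 y₀ + p₁*δ*u 1 y₁ + (1-p₁)*(1-δ)*u 0 y₀)
          + (1/2) * φ ((1-p₀)*(1-δ)*u 0 y₁ + p₀*δ*u 1 y₀ + p₀*(1-δ)*u 1 y₁ + (1-p₀)*δ*u 0 y₀))
          0 1 → q₀ = 0 ∧ q₁ = 1) := by
  set a := u 1 y₁ - u 0 y₁
  set b := u 1 y₀ - u 0 y₀
  obtain ⟨δbar, hδbar, hslopes⟩ := exists_convex_comb_signs_near_one (a := a) (b := b)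
    (by linarith) (by linarith)
  refine ⟨δbar, hδbar, fun δ hδ₁ hδ₂ q₀ q₁ hq₀ hq₁ => ?_⟩
  obtain ⟨hs₁, hs₀⟩ := hslopes δ hδ₁ hδ₂
  have harg₁ : ∀ p : ℝ, (1-p)*δ*u 0 y₁ + p*(1-δ)*u 1 y₀ + p*δ*u 1 y₁ + (1-p)*(1-δ)*u 0 y₀
      = (δ*u 0 y₁ + (1-δ)*u 0 y₀) + p * (δ*a + (1-δ)*b) := fun p => by ring
  have harg₀ : ∀ p : ℝ, (1-p)*(1-δ)*u 0 y₁ + p*δ*u 1 y₀ + p*(1-δ)*u 1 y₁ + (1-p)*δ*u 0 y₀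
      = ((1-δ)*u 0 y₁ + δ*u 0 y₀) + p * ((1-δ)*a + δ*b) := fun p => by ring
  have hψ : StrictMono fun x => (1/2 : ℝ) * φ x := hmono.const_mul one_half_pos
  have hW₁ : StrictMono fun p => (1/2 : ℝ) * φ ((δ*u 0 y₁ + (1-δ)*u 0 y₀) + p * (δ*a + (1-δ)*b)) :=
    hψ.comp (add_right_strictMono.comp (strictMono_mul_right_of_pos hs₁))
  have hW₀ : StrictAnti fun p => (1/2 : ℝ) * φ (((1-δ)*u 0 y₁ + δ*u 0 y₀) + p * ((1-δ)*a + δ*b)) :=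
    hψ.comp_strictAnti (add_right_strictMono.comp_strictAnti (strictAnti_mul_right hs₀))
  simp only [harg₁, harg₀]
  have hle := hW₁.add_strictAnti_le hW₀ hq₁.2 hq₀.1
  have heq := hW₁.eq_of_add_strictAnti_eq hW₀ hq₁.2 hq₀.1
  exact ⟨hle, fun h => (heq h).symm⟩

/-- For a nontrivial utility u (witnessed by y₀, y₁) and strictly increasing concave φ,
there is δ̄ < 1 such that for all δ ∈ (δ̄,1), the social welfare objective W over [0,1]²
has unique maximizer (q₀,q₁) = (0,1). -/
theorem stmt_6 {𝒴 : Type*} (y₀ y₁ : 𝒴) (u : Fin 2 → 𝒴 → ℝ)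
    (hnt1 : u 1 y₁ > u 0 y₁) (hnt0 : u 1 y₀ < u 0 y₀)
    (φ : ℝ → ℝ) (hmono : StrictMono φ) (hconc : ConcaveOn ℝ Set.univ φ) :
    ∃ δbar : ℝ, δbar < 1 ∧ ∀ δ : ℝ, δbar < δ → δ < 1 →
      ∀ q₀ q₁ : ℝ, q₀ ∈ Set.Icc (0:ℝ) 1 → q₁ ∈ Set.Icc (0:ℝ) 1 →
        (fun p₀ p₁ : ℝ =>
            (1/2) * φ ((1-p₁)*δ*u 0 y₁ + p₁*(1-δ)*u 1 y₀ + p₁*δ*u 1 y₁ + (1-p₁)*(1-δ)*u 0 y₀)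
          + (1/2) * φ ((1-p₀)*(1-δ)*u 0 y₁ + p₀*δ*u 1 y₀ + p₀*(1-δ)*u 1 y₁ + (1-p₀)*δ*u 0 y₀))
          q₀ q₁ ≤
        (fun p₀ p₁ : ℝ =>
            (1/2) * φ ((1-p₁)*δ*u 0 y₁ + p₁*(1-δ)*u 1 y₀ + p₁*δ*u 1 y₁ + (1-p₁)*(1-δ)*u 0 y₀)
          + (1/2) * φ ((1-p₀)*(1-δ)*u 0 y₁ + p₀*δ*u 1 y₀ + p₀*(1-δ)*u 1 y₁ + (1-p₀)*δ*u 0 y₀))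
          0 1 ∧
        ((fun p₀ p₁ : ℝ =>
            (1/2) * φ ((1-p₁)*δ*u 0 y₁ + p₁*(1-δ)*u 1 y₀ + p₁*δ*u 1 y₁ + (1-p₁)*(1-δ)*u 0 y₀)
          + (1/2) * φ ((1-p₀)*(1-δ)*u 0 y₁ + p₀*δ*u 1 y₀ + p₀*(1-δ)*u 1 y₁ + (1-p₀)*δ*u 0 y₀))
          q₀ q₁ =
        (fun p₀ p₁ : ℝ =>
            (1/2) * φ ((1-p₁)*δ*u 0 y₁ + p₁*(1-δ)*u 1 y₀ + p₁*δ*u 1 y₁ + (1-p₁)*(1-δ)*u 0 y₀)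
          + (1/2) * φ ((1-p₀)*(1-δ)*u 0 y₁ + p₀*δ*u 1 y₀ + p₀*(1-δ)*u 1 y₁ + (1-p₀)*δ*u 0 y₀))
          0 1 → q₀ = 0 ∧ q₁ = 1) :=
  stmt_6_general y₀ y₁ u hnt1 hnt0 φ hmono
end

section
/- Any constrained optimization choice rule is distinct from any social welfare choice rule: for every nontrivial utility u, strictly increasing concave φ, accuracy measure v, and fairness constraint chosen among Equalized Odds, Equality of False Negatives, Equality of False Positives, or Statistical Parity, there exists a population distribution μ on which the social-welfare-optimal algorithm fails the fairness constraint, hence cannot be chosen by the constrained optimization Designer. -/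
/-!
The welfare of an algorithm splits into one term `φ (E_g (q g))` per group, and `E_g` is affine in
`q g` with slope the expected gain from treatment in group `g`. Taking the majority type of group
`g` to be `y_g` with probability `δ` close to `1`, this gain is positive for group `1` and negative
for group `0`, so, `φ` being strictly increasing, the only welfare-optimal algorithm is
`q = (0, 1)`. It treats each type with probability `0` in group `0` and `1` in group `1`, which
violates all four fairness constraints.
-/

/-- Joint distribution in the construction: groups G ∈ {0,1} equally likely, X = G,
μ(Y = y_j | G = j) = δ (all mass on {y₀,y₁}), and D = 1 with probability q_g given G = g:
P(Y=y, G=g, D=d) = (1/2)·μ(Y=y|G=g)·(q_g if d=1 else 1-q_g). -/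
noncomputable def joint7 {𝒴 : Type*} [DecidableEq 𝒴] (y₀ y₁ : 𝒴) (δ : ℝ)
    (q : Fin 2 → ℝ) (y : 𝒴) (g d : Fin 2) : ℝ :=
  (1/2) * (if (g = 1 ∧ y = y₁) ∨ (g = 0 ∧ y = y₀) then δ
           else if (g = 1 ∧ y = y₀) ∨ (g = 0 ∧ y = y₁) then 1 - δ else 0) *
    (if d = 1 then q g else 1 - q g)

/-- P(Y=y, G=g) under the construction. -/
noncomputable def margYG7 {𝒴 : Type*} [DecidableEq 𝒴] (y₀ y₁ : 𝒴) (δ : ℝ)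
    (q : Fin 2 → ℝ) (y : 𝒴) (g : Fin 2) : ℝ :=
  joint7 y₀ y₁ δ q y g 1 + joint7 y₀ y₁ δ q y g 0

/-- P(D=1 | Y=y, G=g) under the construction. -/
noncomputable def condD7 {𝒴 : Type*} [DecidableEq 𝒴] (y₀ y₁ : 𝒴) (δ : ℝ)
    (q : Fin 2 → ℝ) (y : 𝒴) (g : Fin 2) : ℝ :=
  joint7 y₀ y₁ δ q y g 1 / margYG7 y₀ y₁ δ q y g

/-- The four fairness constraints: 0 = Equalized Odds, 1 = Equality of False Negatives
(conditioning on Y = y₁, the "needs treatment" type), 2 = Equality of False Positives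
(conditioning on Y = y₀), 3 = Statistical Parity. -/
noncomputable def fair7 {𝒴 : Type*} [Fintype 𝒴] [DecidableEq 𝒴] (y₀ y₁ : 𝒴) (δ : ℝ)
    (q : Fin 2 → ℝ) (c : Fin 4) : Prop :=
  if c = 0 then
    ∀ y : 𝒴, 0 < margYG7 y₀ y₁ δ q y 0 → 0 < margYG7 y₀ y₁ δ q y 1 →
      condD7 y₀ y₁ δ q y 0 = condD7 y₀ y₁ δ q y 1
  else if c = 1 then condD7 y₀ y₁ δ q y₁ 0 = condD7 y₀ y₁ δ q y₁ 1
  else if c = 2 then condD7 y₀ y₁ δ q y₀ 0 = condD7 y₀ y₁ δ q y₀ 1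
  else (∑ y : 𝒴, joint7 y₀ y₁ δ q y 0 1) / (1/2) = (∑ y : 𝒴, joint7 y₀ y₁ δ q y 1 1) / (1/2)

/-- Social welfare objective Σ_g (1/2)·φ(E_{P_g}[u(D,Y)]) under the construction. -/
noncomputable def welfare7 {𝒴 : Type*} [Fintype 𝒴] [DecidableEq 𝒴] (y₀ y₁ : 𝒴)
    (u : Fin 2 → 𝒴 → ℝ) (φ : ℝ → ℝ) (δ : ℝ) (q : Fin 2 → ℝ) : ℝ :=
  ∑ g : Fin 2, (1/2) * φ (∑ y : 𝒴, ∑ d : Fin 2, (joint7 y₀ y₁ δ q y g d / (1/2)) * u d y)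

open Filter Topology

lemma eventually_one_sub_mul_lt_mul (a : ℝ) {b : ℝ} (hb : 0 < b) :
    ∀ᶠ δ in 𝓝 (1 : ℝ), (1 - δ) * a < δ * b :=
  ContinuousAt.eventually_lt (by fun_prop) (by fun_prop) (by simpa using hb)

lemma exists_half_lt_lt_one_and_one_sub_mul_lt {a b : ℝ} (ha : 0 < a) (hb : 0 < b) :
    ∃ δ : ℝ, 1/2 < δ ∧ δ < 1 ∧ (1 - δ) * a < δ * b ∧ (1 - δ) * b < δ * a := by
  have hnear : ∀ᶠ δ in 𝓝 (1 : ℝ), 1/2 < δ ∧ (1 - δ) * a < δ * b ∧ (1 - δ) * b < δ * a :=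
    (lt_mem_nhds (by norm_num)).and
      ((eventually_one_sub_mul_lt_mul a hb).and (eventually_one_sub_mul_lt_mul b ha))
  have hbelow : ∀ᶠ δ in 𝓝[<] (1 : ℝ), δ < 1 := self_mem_nhdsWithin
  obtain ⟨δ, ⟨hhalf, hab, hba⟩, hδ⟩ := ((hnear.filter_mono nhdsWithin_le_nhds).and hbelow).exists
  exact ⟨δ, hhalf, hδ, hab, hba⟩

section Construction

variable {𝒴 : Type*} [DecidableEq 𝒴] (y₀ y₁ : 𝒴) (δ : ℝ)

/-- `μ(Y = y | G = g)` in the construction. -/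
def typeProb (y : 𝒴) (g : Fin 2) : ℝ :=
  if (g = 1 ∧ y = y₁) ∨ (g = 0 ∧ y = y₀) then δ
  else if (g = 1 ∧ y = y₀) ∨ (g = 0 ∧ y = y₁) then 1 - δ else 0

variable {y₀ y₁}

lemma typeProb_left_zero : typeProb y₀ y₁ δ y₀ 0 = δ := by
  simp [typeProb]

lemma typeProb_right_one : typeProb y₀ y₁ δ y₁ 1 = δ := by
  simp [typeProb]

lemma typeProb_right_zero (hy : y₀ ≠ y₁) : typeProb y₀ y₁ δ y₁ 0 = 1 - δ := by
  simp [typeProb, hy.symm]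

lemma typeProb_left_one (hy : y₀ ≠ y₁) : typeProb y₀ y₁ δ y₀ 1 = 1 - δ := by
  simp [typeProb, hy]

lemma typeProb_eq_zero {y : 𝒴} (h₀ : y ≠ y₀) (h₁ : y ≠ y₁) (g : Fin 2) :
    typeProb y₀ y₁ δ y g = 0 := by
  simp [typeProb, h₀, h₁]

lemma joint7_eq (q : Fin 2 → ℝ) (y : 𝒴) (g d : Fin 2) :
    joint7 y₀ y₁ δ q y g d = 1/2 * typeProb y₀ y₁ δ y g * (if d = 1 then q g else 1 - q g) :=
  rfl

lemma margYG7_eq (q : Fin 2 → ℝ) (y : 𝒴) (g : Fin 2) :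
    margYG7 y₀ y₁ δ q y g = 1/2 * typeProb y₀ y₁ δ y g := by
  rw [margYG7, joint7_eq, joint7_eq, if_pos rfl, if_neg (by decide)]
  ring

lemma condD7_eq_zero {q : Fin 2 → ℝ} {g : Fin 2} (hq : q g = 0) (y : 𝒴) :
    condD7 y₀ y₁ δ q y g = 0 := by
  simp [condD7, joint7_eq, hq]

lemma condD7_eq_one {q : Fin 2 → ℝ} {g : Fin 2} (hq : q g = 1) {y : 𝒴}
    (hy : typeProb y₀ y₁ δ y g ≠ 0) : condD7 y₀ y₁ δ q y g = 1 := by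
  simp [condD7, margYG7, joint7_eq, hq, hy]

end Construction

section Welfare

variable {𝒴 : Type*} [Fintype 𝒴] [DecidableEq 𝒴] {y₀ y₁ : 𝒴} (δ : ℝ) (u : Fin 2 → 𝒴 → ℝ)

variable (y₀ y₁) in
/-- `E_{P_g}[u(D,Y)]` when group `g` is treated with probability `x`. -/
def groupUtility (g : Fin 2) (x : ℝ) : ℝ :=
  ∑ y, typeProb y₀ y₁ δ y g * ((1 - x) * u 0 y + x * u 1 y)

variable (y₀ y₁) in
def treatmentGain (g : Fin 2) : ℝ :=
  ∑ y, typeProb y₀ y₁ δ y g * (u 1 y - u 0 y)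

lemma welfare7_eq (φ : ℝ → ℝ) (q : Fin 2 → ℝ) :
    welfare7 y₀ y₁ u φ δ q =
      1/2 * φ (groupUtility y₀ y₁ δ u 0 (q 0)) + 1/2 * φ (groupUtility y₀ y₁ δ u 1 (q 1)) := by
  have hgroup (g : Fin 2) : ∑ y, ∑ d : Fin 2, joint7 y₀ y₁ δ q y g d / (1/2) * u d y =
      groupUtility y₀ y₁ δ u g (q g) := by
    refine Finset.sum_congr rfl fun y _ => ?_
    rw [Fin.sum_univ_two, joint7_eq, joint7_eq, if_neg (by decide), if_pos rfl]
    ring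
  rw [welfare7, Fin.sum_univ_two, hgroup, hgroup]

lemma groupUtility_eq_add (g : Fin 2) (x : ℝ) :
    groupUtility y₀ y₁ δ u g x = groupUtility y₀ y₁ δ u g 0 + x * treatmentGain y₀ y₁ δ u g := by
  rw [groupUtility, groupUtility, treatmentGain, Finset.mul_sum, ← Finset.sum_add_distrib]
  exact Finset.sum_congr rfl fun y _ => by ring

lemma groupUtility_strictMono {g : Fin 2} (hg : 0 < treatmentGain y₀ y₁ δ u g) :
    StrictMono (groupUtility y₀ y₁ δ u g) := fun x x' hx => by
  rw [groupUtility_eq_add δ u g x, groupUtility_eq_add δ u g x']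
  gcongr

lemma groupUtility_strictAnti {g : Fin 2} (hg : treatmentGain y₀ y₁ δ u g < 0) :
    StrictAnti (groupUtility y₀ y₁ δ u g) := fun x x' hx => by
  rw [groupUtility_eq_add δ u g x, groupUtility_eq_add δ u g x']
  nlinarith

lemma treatmentGain_eq (hy : y₀ ≠ y₁) (g : Fin 2) :
    treatmentGain y₀ y₁ δ u g =
      typeProb y₀ y₁ δ y₀ g * (u 1 y₀ - u 0 y₀) + typeProb y₀ y₁ δ y₁ g * (u 1 y₁ - u 0 y₁) :=
  Fintype.sum_eq_add y₀ y₁ hy fun _ h => by rw [typeProb_eq_zero δ h.1 h.2, zero_mul]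

lemma welfare7_update_sub (φ : ℝ → ℝ) (q : Fin 2 → ℝ) (g : Fin 2) (x : ℝ) :
    welfare7 y₀ y₁ u φ δ (Function.update q g x) - welfare7 y₀ y₁ u φ δ q =
      1/2 * (φ (groupUtility y₀ y₁ δ u g x) - φ (groupUtility y₀ y₁ δ u g (q g))) := by
  fin_cases g <;> simp [welfare7_eq] <;> ring

variable {φ : ℝ → ℝ} {q : Fin 2 → ℝ} {g : Fin 2}

lemma eq_one_of_welfare7_update_le (hφ : StrictMono φ) (hg : 0 < treatmentGain y₀ y₁ δ u g)
    (hq : q g ≤ 1)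
    (hopt : welfare7 y₀ y₁ u φ δ (Function.update q g 1) ≤ welfare7 y₀ y₁ u φ δ q) :
    q g = 1 := by
  have hle : φ (groupUtility y₀ y₁ δ u g 1) ≤ φ (groupUtility y₀ y₁ δ u g (q g)) := by
    linarith [welfare7_update_sub (y₀ := y₀) (y₁ := y₁) δ u φ q g 1]
  exact le_antisymm hq ((hφ.comp (groupUtility_strictMono δ u hg)).le_iff_le.mp hle)

lemma eq_zero_of_welfare7_update_le (hφ : StrictMono φ) (hg : treatmentGain y₀ y₁ δ u g < 0)
    (hq : 0 ≤ q g)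
    (hopt : welfare7 y₀ y₁ u φ δ (Function.update q g 0) ≤ welfare7 y₀ y₁ u φ δ q) :
    q g = 0 := by
  have hle : φ (groupUtility y₀ y₁ δ u g 0) ≤ φ (groupUtility y₀ y₁ δ u g (q g)) := by
    linarith [welfare7_update_sub (y₀ := y₀) (y₁ := y₁) δ u φ q g 0]
  exact le_antisymm ((hφ.comp_strictAnti (groupUtility_strictAnti δ u hg)).le_iff_ge.mp hle) hq

end Welfare

lemma not_fair7 {𝒴 : Type*} [Fintype 𝒴] [DecidableEq 𝒴] {y₀ y₁ : 𝒴} (hy : y₀ ≠ y₁) {δ : ℝ}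
    (hδ₀ : 0 < δ) (hδ₁ : δ < 1) {q : Fin 2 → ℝ} (hq₀ : q 0 = 0) (hq₁ : q 1 = 1) (c : Fin 4) :
    ¬ fair7 y₀ y₁ δ q c := by
  have hcond₀ := condD7_eq_zero (y₀ := y₀) (y₁ := y₁) δ hq₀
  have hcond₁ : condD7 y₀ y₁ δ q y₁ 1 = 1 :=
    condD7_eq_one δ hq₁ (by rw [typeProb_right_one]; exact hδ₀.ne')
  fin_cases c
  · intro hf
    have := hf y₁ (by rw [margYG7_eq, typeProb_right_zero δ hy]; linarith)
      (by rw [margYG7_eq, typeProb_right_one]; linarith)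
    simp [hcond₀, hcond₁] at this
  · simp [fair7, hcond₀, hcond₁]
  · have hcond₁' : condD7 y₀ y₁ δ q y₀ 1 = 1 :=
      condD7_eq_one δ hq₁ (by rw [typeProb_left_one δ hy]; linarith)
    simp [fair7, hcond₀, hcond₁']
  · have hsum₁ : ∑ y, joint7 y₀ y₁ δ q y 1 1 = 1/2 := by
      rw [Fintype.sum_eq_add y₀ y₁ hy fun _ h => by
        rw [joint7_eq, typeProb_eq_zero δ h.1 h.2]; ring]
      rw [joint7_eq, joint7_eq, typeProb_left_one δ hy, typeProb_right_one, if_pos rfl, hq₁]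
      ring
    have hsum₀ : ∑ y, joint7 y₀ y₁ δ q y 0 1 = 0 := by simp [joint7_eq, hq₀]
    simp [fair7, hsum₀, hsum₁]

theorem stmt_7_general {𝒴 : Type*} [Fintype 𝒴] [DecidableEq 𝒴] (y₀ y₁ : 𝒴) (hy : y₀ ≠ y₁)
    (u : Fin 2 → 𝒴 → ℝ) (hnt1 : u 1 y₁ > u 0 y₁) (hnt0 : u 1 y₀ < u 0 y₀)
    (φ : ℝ → ℝ) (hmono : StrictMono φ) (c : Fin 4) :
    ∃ δ : ℝ, 1/2 < δ ∧ δ < 1 ∧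
      ∀ q : Fin 2 → ℝ, (∀ g, q g ∈ Set.Icc (0:ℝ) 1) →
        (∀ q' : Fin 2 → ℝ, (∀ g, q' g ∈ Set.Icc (0:ℝ) 1) →
          welfare7 y₀ y₁ u φ δ q' ≤ welfare7 y₀ y₁ u φ δ q) →
        ¬ fair7 y₀ y₁ δ q c := by
  obtain ⟨δ, hδhalf, hδ₁, hgain₀, hgain₁⟩ :=
    exists_half_lt_lt_one_and_one_sub_mul_lt (sub_pos.2 hnt1) (sub_pos.2 hnt0)
  refine ⟨δ, hδhalf, hδ₁, fun q hq hopt => ?_⟩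
  have hupdate (g : Fin 2) (x : ℝ) (hx : x ∈ Set.Icc (0:ℝ) 1) :
      welfare7 y₀ y₁ u φ δ (Function.update q g x) ≤ welfare7 y₀ y₁ u φ δ q :=
    hopt _ fun g' => by rcases eq_or_ne g' g with rfl | h <;> simp [*]
  have hq₀ : q 0 = 0 := eq_zero_of_welfare7_update_le δ u hmono
    (by rw [treatmentGain_eq δ u hy, typeProb_left_zero, typeProb_right_zero δ hy]; linarith)
    (hq 0).1 (hupdate 0 0 (by simp))
  have hq₁ : q 1 = 1 := eq_one_of_welfare7_update_le δ u hmono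
    (by rw [treatmentGain_eq δ u hy, typeProb_left_one δ hy, typeProb_right_one]; linarith)
    (hq 1).2 (hupdate 1 1 (by simp))
  exact not_fair7 hy (by linarith) hδ₁ hq₀ hq₁ c

/-- Proposition 1: for every nontrivial utility u, strictly increasing concave φ, accuracy
measure v, and fairness constraint among Equalized Odds, Equality of False Negatives,
Equality of False Positives, and Statistical Parity, there is a population distribution
(indexed by δ ∈ (1/2,1)) such that every social-welfare-optimal algorithm violates the
fairness constraint, hence cannot be chosen by the constrained optimization Designer. -/
theorem stmt_7 {𝒴 : Type*} [Fintype 𝒴] [DecidableEq 𝒴] (y₀ y₁ : 𝒴) (hy : y₀ ≠ y₁)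
    (u : Fin 2 → 𝒴 → ℝ) (hnt1 : u 1 y₁ > u 0 y₁) (hnt0 : u 1 y₀ < u 0 y₀)
    (φ : ℝ → ℝ) (hmono : StrictMono φ) (hconc : ConcaveOn ℝ Set.univ φ)
    (v : Fin 2 → 𝒴 → ℝ) (c : Fin 4) :
    ∃ δ : ℝ, 1/2 < δ ∧ δ < 1 ∧
      ∀ q : Fin 2 → ℝ, (∀ g, q g ∈ Set.Icc (0:ℝ) 1) →
        (∀ q' : Fin 2 → ℝ, (∀ g, q' g ∈ Set.Icc (0:ℝ) 1) →
          welfare7 y₀ y₁ u φ δ q' ≤ welfare7 y₀ y₁ u φ δ q) →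
        ¬ fair7 y₀ y₁ δ q c :=
  stmt_7_general y₀ y₁ hy u hnt1 hnt0 φ hmono c
end

section
/- In the two-group example, the welfare gap between the unconstrained social optimum and the best Equalized-Odds-constrained algorithm, namely φ(δ) − max_{q∈[0,1]} [(1/2)φ(qδ+(1-q)(1-δ)) + (1/2)φ((1-q)δ+q(1-δ))], is at least φ(δ) − φ(1/2) > 0 for every concave strictly increasing φ and δ ∈ (1/2,1). -/
/-! Under Equalized Odds the two groups' accuracies `qδ + (1-q)(1-δ)` and `(1-q)δ + q(1-δ)`
always sum to `1`, so by concavity the average welfare is at most `φ (1/2)`, whatever `q`.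
Strict monotonicity then separates `φ (1/2)` from the unconstrained optimum `φ δ`. -/

theorem ConcaveOn.half_add_half_le_of_add_eq_one {φ : ℝ → ℝ} (hφ : ConcaveOn ℝ Set.univ φ)
    {a b : ℝ} (hab : a + b = 1) :
    (1/2) * φ a + (1/2) * φ b ≤ φ (1/2) := by
  have h := hφ.2 (Set.mem_univ a) (Set.mem_univ b) (by norm_num : (0:ℝ) ≤ 1/2)
    (by norm_num : (0:ℝ) ≤ 1/2) (by norm_num)
  have hmid : (1/2 : ℝ) * a + (1/2 : ℝ) * b = 1/2 := by linarith
  simpa only [smul_eq_mul, hmid] using h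

theorem sSup_equalizedOdds_welfare_le {φ : ℝ → ℝ} (hφ : ConcaveOn ℝ Set.univ φ) (δ : ℝ) :
    sSup ((fun q : ℝ => (1/2) * φ (q*δ + (1-q)*(1-δ)) + (1/2) * φ ((1-q)*δ + q*(1-δ)))
      '' Set.Icc (0:ℝ) 1) ≤ φ (1/2) := by
  refine csSup_le ((Set.nonempty_Icc.2 zero_le_one).image _) ?_
  rintro _ ⟨q, -, rfl⟩
  exact hφ.half_add_half_le_of_add_eq_one (by ring)

theorem stmt_13_general (φ : ℝ → ℝ) (hconc : ConcaveOn ℝ Set.univ φ) (hmono : StrictMono φ)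
    (δ : ℝ) (hδ : 1/2 < δ) :
    φ δ - sSup ((fun q : ℝ => (1/2) * φ (q*δ + (1-q)*(1-δ)) + (1/2) * φ ((1-q)*δ + q*(1-δ)))
        '' Set.Icc (0:ℝ) 1) ≥ φ δ - φ (1/2) ∧
      0 < φ δ - φ (1/2) := by
  have hsup := sSup_equalizedOdds_welfare_le hconc δ
  have hgap : φ (1/2) < φ δ := hmono hδ
  exact ⟨by linarith, by linarith⟩

/-- The welfare gap between the unconstrained social optimum φ(δ) and the best
Equalized-Odds-constrained algorithm is at least φ(δ) − φ(1/2) > 0. -/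
theorem stmt_13 (φ : ℝ → ℝ) (hconc : ConcaveOn ℝ Set.univ φ) (hmono : StrictMono φ)
    (δ : ℝ) (hδ : 1/2 < δ) (hδ1 : δ < 1) :
    φ δ - sSup ((fun q : ℝ => (1/2) * φ (q*δ + (1-q)*(1-δ)) + (1/2) * φ ((1-q)*δ + q*(1-δ)))
        '' Set.Icc (0:ℝ) 1) ≥ φ δ - φ (1/2) ∧
      0 < φ δ - φ (1/2) :=
  stmt_13_general φ hconc hmono δ hδ
end
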